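/- The superextension λ(C₃) of the cyclic group C₃ of order 3 is isomorphic to the semigroup L₁⊔C₃. -/

import Mathlib

open Set

/-- An *upfamily* on `X`: a nonempty family of nonempty subsets of `X`
that is closed under taking supersets. -/
def IsUpfamily {X : Type*} (F : Set (Set X)) : Prop :=
  F.Nonempty ∧ (∀ A ∈ F, A.Nonempty) ∧ ∀ A ∈ F, ∀ B : Set X, A ⊆ B → B ∈ F

/-- The space `υ(X)` of upfamilies on `X`. -/
def Upfamily (X : Type*) : Type _ := {F : Set (Set X) // IsUpfamily F}

/-- The extension of the binary operation of `X` to families of subsets of `X`: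
`𝓐*𝓑 = ⟨⋃_{a ∈ A} a*B_a : A ∈ 𝓐, {B_a}_{a∈A} ⊆ 𝓑⟩`. -/
def upMul {X : Type*} [Mul X] (F G : Set (Set X)) : Set (Set X) :=
  {C | ∃ A ∈ F, ∃ B : X → Set X, (∀ a ∈ A, B a ∈ G) ∧ (⋃ a ∈ A, (fun y => a * y) '' B a) ⊆ C}

theorem IsUpfamily.upMul {X : Type*} [Mul X] {F G : Set (Set X)}
    (hF : IsUpfamily F) (hG : IsUpfamily G) : IsUpfamily (upMul F G) := by
  obtain ⟨⟨A0, hA0⟩, hFne, hFup⟩ := hF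
  obtain ⟨⟨B0, hB0⟩, hGne, hGup⟩ := hG
  refine ⟨⟨univ, A0, hA0, fun _ => B0, fun a _ => hB0, subset_univ _⟩, ?_, ?_⟩
  · rintro C ⟨A, hA, B, hB, hsub⟩
    obtain ⟨a, ha⟩ := hFne A hA
    obtain ⟨b, hb⟩ := hGne (B a) (hB a ha)
    exact ⟨a * b, hsub (mem_biUnion ha ⟨b, hb, rfl⟩)⟩
  · rintro C ⟨A, hA, B, hB, hsub⟩ D hCD
    exact ⟨A, hA, B, hB, hsub.trans hCD⟩

/-- `υ(X)` is a semigroup under the extended operation. -/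
instance {X : Type*} [Mul X] : Mul (Upfamily X) :=
  ⟨fun F G => ⟨upMul F.1 G.1, F.2.upMul G.2⟩⟩

/-- The embedding `X → υ(X)`, `x ↦ ⟨x⟩ = {A ⊆ X : x ∈ A}`. -/
def Upfamily.principal {X : Type*} (x : X) : Upfamily X :=
  ⟨{A | x ∈ A}, ⟨univ, mem_univ x⟩, fun A hA => ⟨x, hA⟩, fun _ hA _ hAB => hAB hA⟩

/-- An upfamily is linked if any two of its members intersect. -/
def Upfamily.Linked {X : Type*} (F : Upfamily X) : Prop :=
  ∀ A ∈ F.1, ∀ B ∈ F.1, (A ∩ B).Nonempty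

/-- Maximal linked upfamilies. -/
def Upfamily.IsMaxLinked {X : Type*} (F : Upfamily X) : Prop :=
  F.Linked ∧ ∀ G : Upfamily X, G.Linked → F.1 ⊆ G.1 → F = G

/-- Filters: upfamilies closed under binary intersections. -/
def Upfamily.IsFilter {X : Type*} (F : Upfamily X) : Prop :=
  ∀ A ∈ F.1, ∀ B ∈ F.1, A ∩ B ∈ F.1

/-- Ultrafilters: maximal filters. -/
def Upfamily.IsUltrafilter {X : Type*} (F : Upfamily X) : Prop :=
  F.IsFilter ∧ ∀ G : Upfamily X, G.IsFilter → F.1 ⊆ G.1 → F = G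

/-- The superextension `λ(X)` of maximal linked upfamilies. -/
def lambdaS (X : Type*) : Set (Upfamily X) := {F | F.IsMaxLinked}

/-- The semigroup `N₂(X)` of linked upfamilies. -/
def N2S (X : Type*) : Set (Upfamily X) := {F | F.Linked}

/-- The semigroup `φ(X)` of filters. -/
def phiS (X : Type*) : Set (Upfamily X) := {F | F.IsFilter}

/-- The Stone-Čech extension `β(X)` of ultrafilters. -/
def betaS (X : Type*) : Set (Upfamily X) := {F | F.IsUltrafilter}

section SemigroupProps

variable {M : Type*} [Mul M]

/-- A subset closed under multiplication (i.e. a subsemigroup). -/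
def mulClosed (S : Set M) : Prop := ∀ a ∈ S, ∀ b ∈ S, a * b ∈ S

/-- The operation is commutative on `S`. -/
def commOn (S : Set M) : Prop := ∀ a ∈ S, ∀ b ∈ S, a * b = b * a

/-- The idempotents of `S` commute. -/
def idemCommOn (S : Set M) : Prop :=
  ∀ a ∈ S, ∀ b ∈ S, a * a = a → b * b = b → a * b = b * a

/-- `S` is an inverse semigroup: every element has a unique inverse in `S`. -/
def inverseOn (S : Set M) : Prop :=
  ∀ a ∈ S, ∃! b, b ∈ S ∧ a * b * a = a ∧ b * a * b = b

/-- `H` is a subgroup of the ambient multiplicative structure: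
it is closed under multiplication and carries a group structure. -/
def IsSubgroupIn (H : Set M) : Prop :=
  (∀ a ∈ H, ∀ b ∈ H, a * b ∈ H) ∧
    ∃ e ∈ H, (∀ a ∈ H, e * a = a ∧ a * e = a) ∧ ∀ a ∈ H, ∃ b ∈ H, a * b = e ∧ b * a = e

/-- `S` is a Clifford semigroup: a union of groups. -/
def cliffordOn (S : Set M) : Prop := ∀ a ∈ S, ∃ H ⊆ S, IsSubgroupIn H ∧ a ∈ H

/-- `S` is regular in `T`: every `a ∈ S` satisfies `a ∈ a T a`. -/
def regularIn (S T : Set M) : Prop := ∀ a ∈ S, ∃ b ∈ T, a * b * a = a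

/-- `ppow a n = a^(n+1)`: positive powers in a semigroup. -/
def ppow (a : M) : ℕ → M
  | 0 => a
  | n + 1 => ppow a n * a

/-- `S` is sub-Clifford: `x^{n+1} = x^{m+1}` implies `x^n = x^m` for positive `n < m`. -/
def subCliffordOn (S : Set M) : Prop :=
  ∀ a ∈ S, ∀ n m : ℕ, n < m → ppow a (n + 1) = ppow a (m + 1) → ppow a n = ppow a m

end SemigroupProps

/-- The cyclic group `Cₙ` of order `n`. -/
abbrev Cgrp (n : ℕ) : Type := Multiplicative (ZMod n)

/-- The linear semilattice `Lₙ = {0,…,n-1}` with the operation of minimum. -/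
def L (n : ℕ) : Type := Fin n

instance {n : ℕ} : Mul (L n) :=
  ⟨fun a b => show Fin n from min (show Fin n from a) (show Fin n from b)⟩

/-- The disjoint ordered union `X ⊔ Y` of two semigroups, in which
`x * y = y * x = x` for `x ∈ X` and `y ∈ Y`. -/
abbrev OSum (A B : Type*) : Type _ := A ⊕ B

instance {A B : Type*} [Mul A] [Mul B] : Mul (OSum A B) :=
  ⟨fun x y =>
    match x, y with
    | Sum.inl a, Sum.inl a' => Sum.inl (a * a')
    | Sum.inl a, Sum.inr _ => Sum.inl a
    | Sum.inr _, Sum.inl a => Sum.inl a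
    | Sum.inr b, Sum.inr b' => Sum.inr (b * b')⟩

/-- `M` is isomorphic to the sub-semigroup `S` of `N`: there is an injective
operation-preserving map of `M` onto `S`. -/
def MulIsoOnto (M : Type*) [Mul M] {N : Type*} [Mul N] (S : Set N) : Prop :=
  ∃ f : M → N, Function.Injective f ∧ Set.range f = S ∧ ∀ x y : M, f (x * y) = f x * f y

/-!
A maximal linked upfamily either contains a singleton `{x}`, and is then the principal
ultrafilter `⟨x⟩`, or consists of sets with at least two points. On a three-point set any two
such sets meet, so the family `Δ` of all sets with at least two points is itself maximal linked,
and `λ(C₃) = {Δ} ∪ {⟨x⟩ : x ∈ C₃}`. In a group, translations are injective and act transitively,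
so `Δ * Δ = Δ * ⟨g⟩ = ⟨g⟩ * Δ = Δ`: `Δ` is a zero adjoined to `C₃`, which is `L₁ ⊔ C₃`.
-/

namespace Upfamily

variable {X : Type*}

theorem ext {F G : Upfamily X} (h : F.1 = G.1) : F = G := Subtype.ext h

theorem mem_principal {x : X} {A : Set X} : A ∈ (principal x).1 ↔ x ∈ A := Iff.rfl

theorem principal_injective : Function.Injective (principal : X → Upfamily X) := fun x y h => by
  have hx : {x} ∈ (principal y).1 := h ▸ mem_principal.2 rfl
  exact (mem_singleton_iff.1 (mem_principal.1 hx)).symm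

theorem principal_isMaxLinked (x : X) : (principal x).IsMaxLinked := by
  refine ⟨fun A hA B hB => ⟨x, hA, hB⟩, fun G hG hsub => ext (hsub.antisymm fun B hB => ?_)⟩
  obtain ⟨y, hyB, rfl⟩ := hG B hB {x} (hsub rfl)
  exact hyB

theorem Linked.eq_principal_of_singleton_mem {F : Upfamily X} (hF : F.Linked) {x : X}
    (hx : {x} ∈ F.1) : F = principal x :=
  ((principal_isMaxLinked x).2 F hF fun _ hA => F.2.2.2 {x} hx _ (singleton_subset_iff.2 hA)).symm

theorem principal_mul_principal [Mul X] (x y : X) :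
    principal x * principal y = principal (x * y) := by
  refine ext (Set.ext fun C => ⟨?_, fun hC => ⟨{x}, rfl, fun _ => {y}, fun _ _ => rfl, ?_⟩⟩)
  · rintro ⟨A, hA, B, hB, hsub⟩
    exact hsub (mem_biUnion hA (mem_image_of_mem _ (hB x hA)))
  · simpa using mem_principal.1 hC

def nontrivialSets (X : Type*) [Nontrivial X] : Upfamily X :=
  ⟨{A | A.Nontrivial}, ⟨univ, nontrivial_univ⟩, fun _ hA => hA.nonempty,
    fun _ hA _ hAB => hA.mono hAB⟩

section nontrivialSets

variable [Nontrivial X]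

theorem nontrivialSets_ne_principal (x : X) : nontrivialSets X ≠ principal x := fun h =>
  not_nontrivial_singleton (show {x} ∈ (nontrivialSets X).1 from h ▸ mem_principal.2 rfl)

theorem subset_nontrivialSets_of_forall_singleton_notMem {F : Upfamily X}
    (hF : ∀ x, {x} ∉ F.1) : F.1 ⊆ (nontrivialSets X).1 := fun A hA => by
  obtain ⟨x, rfl⟩ | hA' := (F.2.2.1 A hA).exists_eq_singleton_or_nontrivial
  · exact absurd hA (hF x)
  · exact hA'

theorem linked_nontrivialSets [Finite X] (hX : Nat.card X ≤ 3) : (nontrivialSets X).Linked := by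
  intro A hA B hB
  by_contra hAB
  rw [not_nonempty_iff_eq_empty, ← disjoint_iff_inter_eq_empty] at hAB
  have := ncard_union_eq hAB (toFinite A) (toFinite B)
  have := ncard_le_card (A ∪ B)
  have := one_lt_ncard_iff_nontrivial.2 hA
  have := one_lt_ncard_iff_nontrivial.2 hB
  omega

theorem nontrivialSets_isMaxLinked [Finite X] (hX : Nat.card X = 3) :
    (nontrivialSets X).IsMaxLinked := by
  refine ⟨linked_nontrivialSets hX.le, fun G hG hsub => ext (hsub.antisymm fun B hB => ?_)⟩
  obtain ⟨x, rfl⟩ | hB' := (G.2.2.1 B hB).exists_eq_singleton_or_nontrivial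
  · have hcompl : ({x}ᶜ : Set X).Nontrivial := by
      rw [← one_lt_ncard_iff_nontrivial, ncard_compl, ncard_singleton]
      omega
    obtain ⟨y, rfl, hy⟩ := hG _ hB _ (hsub hcompl)
    exact (hy rfl).elim
  · exact hB'

theorem lambdaS_eq_insert_range_principal [Finite X] (hX : Nat.card X = 3) :
    lambdaS X = insert (nontrivialSets X) (range principal) := by
  refine Set.ext fun F => ⟨fun hF => ?_, ?_⟩
  · by_cases hs : ∃ x, {x} ∈ F.1
    · obtain ⟨x, hx⟩ := hs
      exact Or.inr ⟨x, (hF.1.eq_principal_of_singleton_mem hx).symm⟩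
    · exact Or.inl (hF.2 _ (linked_nontrivialSets hX.le)
        (subset_nontrivialSets_of_forall_singleton_notMem (not_exists.1 hs)))
  · rintro (rfl | ⟨x, rfl⟩)
    · exact nontrivialSets_isMaxLinked hX
    · exact principal_isMaxLinked x

variable [Group X]

theorem nontrivialSets_mul_nontrivialSets :
    nontrivialSets X * nontrivialSets X = nontrivialSets X := by
  refine ext (Set.ext fun C => ⟨?_, fun hC => ?_⟩)
  · rintro ⟨A, hA, B, hB, hsub⟩
    obtain ⟨a, ha⟩ := hA.nonempty
    exact ((hB a ha).image (mul_right_injective a)).mono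
      fun _ hc => hsub (mem_biUnion ha hc)
  · refine ⟨univ, nontrivial_univ, fun a => (a⁻¹ * ·) '' C,
      fun a _ => hC.image (mul_right_injective a⁻¹), ?_⟩
    simp [subset_def]

theorem nontrivialSets_mul_principal (g : X) :
    nontrivialSets X * principal g = nontrivialSets X := by
  refine ext (Set.ext fun C => ⟨?_, fun hC => ?_⟩)
  · rintro ⟨A, hA, B, hB, hsub⟩
    refine (hA.image (mul_left_injective g)).mono ?_
    rintro _ ⟨a, ha, rfl⟩
    exact hsub (mem_biUnion ha (mem_image_of_mem _ (hB a ha)))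
  · refine ⟨(· * g⁻¹) '' C, hC.image (mul_left_injective g⁻¹), fun _ => {g}, fun _ _ => rfl, ?_⟩
    simp

theorem principal_mul_nontrivialSets (g : X) :
    principal g * nontrivialSets X = nontrivialSets X := by
  refine ext (Set.ext fun C => ⟨?_, fun hC => ?_⟩)
  · rintro ⟨A, hA, B, hB, hsub⟩
    exact ((hB g hA).image (mul_right_injective g)).mono fun _ hc => hsub (mem_biUnion hA hc)
  · refine ⟨{g}, rfl, fun _ => (g⁻¹ * ·) '' C, fun _ _ => hC.image (mul_right_injective g⁻¹), ?_⟩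
    simp [subset_def]

end nontrivialSets

end Upfamily

/-- Proposition 4.1(2): `λ(C₃) ≅ L₁ ⊔ C₃`. -/
theorem superextension_C3 : MulIsoOnto (OSum (L 1) (Cgrp 3)) (lambdaS (Cgrp 3)) := by
  have hcard : Nat.card (Cgrp 3) = 3 := by simp
  have : Nonempty (L 1) := ⟨(0 : Fin 1)⟩
  refine ⟨Sum.elim (fun _ => Upfamily.nontrivialSets (Cgrp 3)) Upfamily.principal, ?_, ?_, ?_⟩
  · exact Function.Injective.sumElim (fun a b _ => Subsingleton.elim (α := Fin 1) a b)
      Upfamily.principal_injective fun _ => Upfamily.nontrivialSets_ne_principal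
  · rw [Set.Sum.elim_range, range_const, Upfamily.lambdaS_eq_insert_range_principal hcard,
      insert_eq]
  · rintro (a | g) (b | h)
    · exact Upfamily.nontrivialSets_mul_nontrivialSets.symm
    · exact (Upfamily.nontrivialSets_mul_principal h).symm
    · exact (Upfamily.principal_mul_nontrivialSets g).symm
    · exact (Upfamily.principal_mul_principal g h).symm
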